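/- Let q be a prime power, m ≥ 1, ℓ ≤ q − 1, and let (n_1, …, n_ℓ) be an ordered partition of n with n_l ≤ m for all l; let 1 ≤ k ≤ n. Let a_1, …, a_ℓ ∈ F_{q^m} be nonzero and pairwise non-σ-conjugate, and for each l let β_{l,1}, …, β_{l,n_l} ∈ F_{q^m} be linearly independent over F_q. Let G^LRS ∈ F_{q^m}^{k×n} be the matrix with entry a_l^{(q^i−1)/(q−1)} · β_{l,t}^{q^i} in row i ∈ {0, …, k−1} and column φ(l,t) := t + n_1 + ⋯ + n_{l−1}. Then the row space of G^LRS is a k-dimensional linear code over F_{q^m} whose minimum sum-rank distance with respect to the partition (n_1, …, n_ℓ) equals n − k + 1; i.e., linearized Reed–Solomon codes are maximum sum-rank distance (MSRD) codes. -/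

import Mathlib

/-- The `F_q`-rank of a vector over `F_{q^m}`. -/
noncomputable def rankFq (Fq : Type*) {K : Type*} [Field Fq] [Field K] [Algebra Fq K]
    {ι : Type*} (y : ι → K) : ℕ :=
  Module.finrank Fq (Submodule.span Fq (Set.range y))

/-- The sum-rank weight with respect to the ordered partition `(n_1, …, n_ℓ)`. -/
noncomputable def sumRankWt (Fq : Type*) {K : Type*} [Field Fq] [Field K] [Algebra Fq K]
    {ℓ : ℕ} {nn : Fin ℓ → ℕ} (x : ((l : Fin ℓ) × Fin (nn l)) → K) : ℕ :=
  ∑ l : Fin ℓ, rankFq Fq (fun t : Fin (nn l) => x ⟨l, t⟩)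

/-! With `σ` the Frobenius `x ↦ x^q`, the `i`-th row of `G^LRS` on block `l` is `D_{a_l}^i β_l`,
where `D_a = skewOp σ a` is the `F_q`-linear operator `x ↦ a σ(x)`. So the codeword with
coefficients `w` is, on block `l`, the image of `β_l` under `f(D_{a_l})` for the skew polynomial
`f = ∑ w_i X^i ∈ K[X; σ]`, and by rank–nullity its weight is `n` minus the sum over `l` of
`dim (span β_l ∩ ker f(D_{a_l}))`. That sum is at most `deg f < k`, by induction on the degree:
a nonzero `u` in the kernel for `a_{l₀}` satisfies `D_{a_{l₀}} u = c u` with `c = a_{l₀} σ(u) / u`,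
so right division of `f` by `X - c` leaves no remainder and `f(D_a) = g(D_a) ∘ (D_a - c)` for all
`a` at once; as `ker (D_a - c)` is `F_q u` for `a = a_{l₀}` and `0` for `a` not σ-conjugate to
`a_{l₀}`, passing from `f` to `g` loses at most one dimension in total.

A word of weight `n - k + 1` exists because a `k`-dimensional code has a nonzero word vanishing on
`k - 1` prescribed coordinates, and sum-rank weight is bounded by Hamming weight. -/

open Finset Module

lemma Submodule.finrank_map_add_finrank_inf_ker {F M N : Type*} [Field F] [AddCommGroup M]
    [Module F M] [AddCommGroup N] [Module F N] (T : M →ₗ[F] N) (V : Submodule F M)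
    [FiniteDimensional F V] :
    finrank F (V.map T) + finrank F (V ⊓ LinearMap.ker T : Submodule F M) = finrank F V := by
  have h := (T.domRestrict V).finrank_range_add_finrank_ker
  rwa [LinearMap.range_domRestrict, LinearMap.ker_domRestrict,
    (Submodule.equivMapOfInjective _ V.injective_subtype _).finrank_eq,
    Submodule.map_comap_subtype] at h

section SkewPolynomial

variable {F K : Type*} [Field F] [Field K] [Algebra F K] (σ : K →ₐ[F] K)

def skewOp (a : K) : Module.End F K := LinearMap.mulLeft F a ∘ₗ σ.toLinearMap

@[simp] lemma skewOp_apply (a x : K) : skewOp σ a x = a * σ x := rfl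

lemma skewOp_pow_apply_mul (a c x : K) (i : ℕ) :
    (skewOp σ a ^ i) (c * x) = (⇑σ)^[i] c * (skewOp σ a ^ i) x := by
  induction i with
  | zero => simp
  | succ i ih =>
    rw [pow_succ', Module.End.mul_apply, Module.End.mul_apply, ih, skewOp_apply, skewOp_apply,
      map_mul, Function.iterate_succ_apply']
    ring

/-- The skew polynomial `∑_{i<n} f i X^i ∈ K[X; σ]` evaluated at the operator `skewOp σ a`. -/
def skewEval (a : K) (f : ℕ → K) (n : ℕ) : Module.End F K :=
  ∑ i ∈ range n, LinearMap.mulLeft F (f i) * skewOp σ a ^ i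

lemma skewEval_apply (a : K) (f : ℕ → K) (n : ℕ) (x : K) :
    skewEval σ a f n x = ∑ i ∈ range n, f i * (skewOp σ a ^ i) x := by
  simp [skewEval, LinearMap.sum_apply, Module.End.mul_apply]

/-- `hfg` says that `f = g · (X - c) + (f 0 + g 0 * c)` in `K[X; σ]`. -/
lemma skewEval_succ_apply {a c : K} {f g : ℕ → K} {n : ℕ} (hg : g n = 0)
    (hfg : ∀ i, f (i + 1) = g i - g (i + 1) * (⇑σ)^[i + 1] c) (x : K) :
    skewEval σ a f (n + 1) x
      = skewEval σ a g n (a * σ x - c * x) + (f 0 + g 0 * c) * x := by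
  set D := skewOp σ a
  set φ : ℕ → K := fun i => g i * (⇑σ)^[i] c * (D ^ i) x
  have hDsub (i : ℕ) : (D ^ i) (D x - c * x) = (D ^ (i + 1)) x - (⇑σ)^[i] c * (D ^ i) x := by
    rw [map_sub, skewOp_pow_apply_mul σ a c x, pow_succ, Module.End.mul_apply]
  have htelescope : ∑ i ∈ range n, f (i + 1) * (D ^ (i + 1)) x
      = ∑ i ∈ range n, g i * (D ^ i) (D x - c * x) + (φ 0 - φ n) := by
    rw [← sum_range_sub', ← sum_add_distrib]
    refine sum_congr rfl fun i _ => ?_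
    rw [hfg, hDsub]
    ring
  rw [skewEval_apply, skewEval_apply, sum_range_succ', htelescope, ← skewOp_apply σ a x]
  simp only [φ, hg, pow_zero, Module.End.one_apply, Function.iterate_zero, id]
  ring

/-- The quotient of the right division of `∑_{i ≤ n} f i X^i` by `X - c` in `K[X; σ]`. -/
def skewDivQuot (c : K) (f : ℕ → K) (n i : ℕ) : K :=
  if i < n then f (i + 1) + skewDivQuot c f n (i + 1) * (⇑σ)^[i + 1] c else 0
termination_by n - i

lemma skewDivQuot_of_le {c : K} {f : ℕ → K} {n i : ℕ} (h : n ≤ i) :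
    skewDivQuot σ c f n i = 0 := by
  rw [skewDivQuot, if_neg (by omega)]

lemma coeff_succ_eq_skewDivQuot {c : K} {f : ℕ → K} {n : ℕ} (hf : ∀ i, n + 1 ≤ i → f i = 0)
    (i : ℕ) :
    f (i + 1) = skewDivQuot σ c f n i - skewDivQuot σ c f n (i + 1) * (⇑σ)^[i + 1] c := by
  by_cases hi : i < n
  · rw [skewDivQuot, if_pos hi]
    ring
  · rw [skewDivQuot_of_le σ (by omega), skewDivQuot_of_le σ (by omega), hf _ (by omega)]
    ring

theorem exists_skewEval_eq_comp_of_apply_eq_zero {a₀ u : K} {f : ℕ → K} {n : ℕ}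
    (hf : ∀ i, n + 1 ≤ i → f i = 0) (hf0 : f ≠ 0) (hu : u ≠ 0)
    (hroot : skewEval σ a₀ f (n + 1) u = 0) :
    ∃ g : ℕ → K, (∀ i, n ≤ i → g i = 0) ∧ g ≠ 0 ∧
      ∀ a x, skewEval σ a f (n + 1) x = skewEval σ a g n (a * σ x - a₀ * σ u / u * x) := by
  set c := a₀ * σ u / u
  set g := skewDivQuot σ c f n
  have hfg := coeff_succ_eq_skewDivQuot σ (c := c) hf
  have hfactor (a : K) := skewEval_succ_apply σ (a := a) (skewDivQuot_of_le σ le_rfl) hfg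
  have hr : f 0 + g 0 * c = 0 := by
    rw [hfactor, show a₀ * σ u - c * u = 0 by rw [div_mul_cancel₀ _ hu, sub_self], map_zero,
      zero_add] at hroot
    exact (mul_eq_zero.mp hroot).resolve_right hu
  refine ⟨g, fun i hi => skewDivQuot_of_le σ hi, fun hg => hf0 (funext fun i => ?_), ?_⟩
  · cases i with
    | zero => simpa [hg] using hr
    | succ i => simp [hfg i, g, hg]
  · intro a x
    rw [hfactor, hr, zero_mul, add_zero]

lemma mem_ker_skewOp_sub {a c x : K} :
    x ∈ LinearMap.ker (skewOp σ a - LinearMap.mulLeft F c) ↔ a * σ x = c * x := by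
  simp [sub_eq_zero]

lemma ker_skewOp_sub_le_span (hfix : ∀ x, σ x = x → x ∈ (algebraMap F K).range) {a u : K}
    (ha : a ≠ 0) (hu : u ≠ 0) :
    LinearMap.ker (skewOp σ a - LinearMap.mulLeft F (a * σ u / u)) ≤ Submodule.span F {u} := by
  intro x hx
  rw [mem_ker_skewOp_sub] at hx
  have hσu : σ u ≠ 0 := (map_ne_zero σ).mpr hu
  have hx' : a * (σ x * u) = a * (σ u * x) := by
    rw [← mul_assoc, hx]
    field_simp
  have hfixed : σ (x / u) = x / u := by
    rw [map_div₀, div_eq_div_iff hσu hu]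
    linear_combination mul_left_cancel₀ ha hx'
  obtain ⟨s, hs⟩ := hfix _ hfixed
  exact Submodule.mem_span_singleton.mpr ⟨s, by rw [Algebra.smul_def, hs, div_mul_cancel₀ _ hu]⟩

lemma ker_skewOp_sub_eq_bot {a a' u : K} (hconj : ∀ c : K, c ≠ 0 → a' ≠ σ c / c * a)
    (hu : u ≠ 0) : LinearMap.ker (skewOp σ a' - LinearMap.mulLeft F (a * σ u / u)) = ⊥ := by
  refine eq_bot_iff.mpr fun x hx => (Submodule.mem_bot F).mpr ?_
  rw [mem_ker_skewOp_sub] at hx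
  by_contra hx0
  have hσx : σ x ≠ 0 := (map_ne_zero σ).mpr hx0
  have hx' : a' * σ x * u = a * σ u * x := by
    rw [hx]
    field_simp
  refine hconj (u / x) (div_ne_zero hu hx0) ?_
  rw [map_div₀]
  field_simp
  linear_combination hx'

end SkewPolynomial

section RootBound

variable {F K : Type*} [Field F] [Field K] [Algebra F K] (σ : K →ₐ[F] K)
  {ι : Type*} {a : ι → K} (ha : ∀ l, a l ≠ 0)
  (hconj : ∀ l l', l ≠ l' → ∀ c : K, c ≠ 0 → a l ≠ σ c / c * a l')
  (hfix : ∀ x, σ x = x → x ∈ (algebraMap F K).range)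
include ha hconj hfix

lemma finrank_inf_ker_skewOp_sub_le [DecidableEq ι] (V : Submodule F K) {l₀ : ι} {u : K}
    (hu : u ≠ 0) (l : ι) :
    finrank F (V ⊓ LinearMap.ker (skewOp σ (a l) - LinearMap.mulLeft F (a l₀ * σ u / u)) :
      Submodule F K) ≤ if l = l₀ then 1 else 0 := by
  split_ifs with hl
  · subst hl
    calc _ ≤ finrank F (Submodule.span F {u}) :=
          Submodule.finrank_mono (inf_le_right.trans (ker_skewOp_sub_le_span σ hfix (ha l) hu))
      _ = 1 := finrank_span_singleton hu
  · rw [ker_skewOp_sub_eq_bot σ (hconj l l₀ hl) hu, inf_bot_eq, finrank_bot]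

theorem sum_finrank_lt_of_le_ker_skewEval [Fintype ι] {n : ℕ} {f : ℕ → K}
    (hf : ∀ i, n ≤ i → f i = 0) (hf0 : f ≠ 0) (V : ι → Submodule F K)
    [∀ l, FiniteDimensional F (V l)] (hV : ∀ l, V l ≤ LinearMap.ker (skewEval σ (a l) f n)) :
    ∑ l, finrank F (V l) < n := by
  classical
  induction n generalizing f V with
  | zero => exact absurd (funext fun i => hf i i.zero_le) hf0
  | succ n ih =>
    by_cases hV0 : ∀ l, V l = ⊥
    · simp [fun l => Submodule.finrank_eq_zero.mpr (hV0 l)]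
    obtain ⟨l₀, hl₀⟩ := not_forall.mp hV0
    obtain ⟨u, huV, hu⟩ := Submodule.exists_mem_ne_zero_of_ne_bot hl₀
    obtain ⟨g, hg, hg0, hfactor⟩ :=
      exists_skewEval_eq_comp_of_apply_eq_zero σ hf hf0 hu (hV l₀ huV)
    let T l := skewOp σ (a l) - LinearMap.mulLeft F (a l₀ * σ u / u)
    have hW (l : ι) : (V l).map (T l) ≤ LinearMap.ker (skewEval σ (a l) g n) := by
      rintro _ ⟨x, hx, rfl⟩
      have h := hV l hx
      rwa [LinearMap.mem_ker, hfactor] at h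
    have hIH := ih hg hg0 _ hW
    calc ∑ l, finrank F (V l)
        ≤ ∑ l, (finrank F ((V l).map (T l)) + if l = l₀ then 1 else 0) := by
          refine sum_le_sum fun l _ => ?_
          rw [← Submodule.finrank_map_add_finrank_inf_ker (T l) (V l)]
          gcongr
          exact finrank_inf_ker_skewOp_sub_le σ ha hconj hfix (V l) hu l
      _ = ∑ l, finrank F ((V l).map (T l)) + 1 := by simp [sum_add_distrib]
      _ < n + 1 := by omega

end RootBound
section SumRank

variable {F K : Type*} [Field F] [Field K] [Algebra F K]

lemma rankFq_add_finrank_inf_ker (L : Module.End F K) {ι : Type*} [Fintype ι] {b : ι → K}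
    (hb : LinearIndependent F b) :
    rankFq F (fun t => L (b t))
      + finrank F (Submodule.span F (Set.range b) ⊓ LinearMap.ker L : Submodule F K)
      = Fintype.card ι := by
  have := FiniteDimensional.span_of_finite F (Set.finite_range b)
  have h := Submodule.finrank_map_add_finrank_inf_ker L (Submodule.span F (Set.range b))
  rwa [← Submodule.span_image, ← Set.range_comp, finrank_span_eq_card hb] at h

lemma rankFq_le_card_support [DecidableEq K] {ι : Type*} [Fintype ι] (y : ι → K) :
    rankFq F y ≤ #{t | y t ≠ 0} := by
  have := FiniteDimensional.span_finset F (({t | y t ≠ 0} : Finset ι).image y)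
  have hspan : Submodule.span F (Set.range y)
      ≤ Submodule.span F (({t | y t ≠ 0} : Finset ι).image y : Set K) := by
    rw [Submodule.span_le]
    rintro _ ⟨t, rfl⟩
    by_cases ht : y t = 0
    · simp [ht]
    · exact Submodule.subset_span (mem_image_of_mem y (by simpa using ht))
  calc rankFq F y ≤ _ := Submodule.finrank_mono hspan
    _ ≤ _ := finrank_span_finset_le_card _
    _ ≤ _ := card_image_le

lemma sumRankWt_le_card_support [DecidableEq K] {ℓ : ℕ} {nn : Fin ℓ → ℕ}
    (x : ((l : Fin ℓ) × Fin (nn l)) → K) : sumRankWt F x ≤ #{j | x j ≠ 0} := by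
  calc sumRankWt F x ≤ ∑ l, #{t | x ⟨l, t⟩ ≠ 0} :=
        sum_le_sum fun l _ => rankFq_le_card_support _
    _ = #{j | x j ≠ 0} := by simp only [card_filter, Fintype.sum_sigma]

lemma exists_ne_zero_card_support_le [DecidableEq K] {ι : Type*} [Fintype ι] [DecidableEq ι]
    (C : Submodule K (ι → K)) (hC : 0 < finrank K C) :
    ∃ c ∈ C, c ≠ 0 ∧ #{j | c j ≠ 0} ≤ Fintype.card ι - finrank K C + 1 := by
  have hCle : finrank K C ≤ Fintype.card ι :=
    (Submodule.finrank_le C).trans_eq (finrank_fintype_fun_eq_card K)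
  obtain ⟨J, -, hJ⟩ := exists_subset_card_eq (s := (univ : Finset ι)) (n := finrank K C - 1)
    (by rw [card_univ]; omega)
  let restrict : C →ₗ[K] (J → K) := (LinearMap.pi fun j : J => LinearMap.proj j.1) ∘ₗ C.subtype
  obtain ⟨c, hc, hc0⟩ := Submodule.exists_mem_ne_zero_of_ne_bot <|
    restrict.ker_ne_bot_of_finrank_lt (by rw [finrank_fintype_fun_eq_card, Fintype.card_coe]; omega)
  have hcJ : ∀ j ∈ J, (c : ι → K) j = 0 := fun j hj =>
    congr_fun (LinearMap.mem_ker.mp hc) ⟨j, hj⟩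
  refine ⟨c, c.2, by simpa using hc0, ?_⟩
  calc #{j | (c : ι → K) j ≠ 0} ≤ #Jᶜ :=
        card_le_card fun j hj => mem_compl.mpr fun hjJ => (mem_filter.mp hj).2 (hcJ j hjJ)
    _ ≤ _ := by rw [card_compl]; omega

end SumRank

section LinearizedReedSolomon

variable {F K : Type*} [Field F] [Field K] [Algebra F K] (σ : K →ₐ[F] K)
  {ℓ : ℕ} {nn : Fin ℓ → ℕ} {a : Fin ℓ → K} (ha : ∀ l, a l ≠ 0)
  (hconj : ∀ l l', l ≠ l' → ∀ c : K, c ≠ 0 → a l ≠ σ c / c * a l')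
  (hfix : ∀ x, σ x = x → x ∈ (algebraMap F K).range)
  {β : (l : Fin ℓ) → Fin (nn l) → K} (hβ : ∀ l, LinearIndependent F (β l))
include ha hconj hfix hβ

theorem lt_sumRankWt_skewEval_add {k : ℕ} {f : ℕ → K} (hf : ∀ i, k ≤ i → f i = 0)
    (hf0 : f ≠ 0) :
    ∑ l, nn l < sumRankWt F (fun j : (l : Fin ℓ) × Fin (nn l) =>
      skewEval σ (a j.1) f k (β j.1 j.2)) + k := by
  have (l : Fin ℓ) := FiniteDimensional.span_of_finite F (Set.finite_range (β l))
  have hroot := sum_finrank_lt_of_le_ker_skewEval σ ha hconj hfix hf hf0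
    (fun l => Submodule.span F (Set.range (β l)) ⊓ LinearMap.ker (skewEval σ (a l) f k))
    fun l => inf_le_right
  have hblock := fun l => rankFq_add_finrank_inf_ker (skewEval σ (a l) f k) (hβ l)
  simp only [Fintype.card_fin] at hblock
  have hwt : sumRankWt F (fun j : (l : Fin ℓ) × Fin (nn l) => skewEval σ (a j.1) f k (β j.1 j.2))
      = ∑ l, rankFq F (fun t => skewEval σ (a l) f k (β l t)) := rfl
  rw [hwt, ← sum_congr rfl fun l _ => hblock l, sum_add_distrib]
  omega

theorem lt_sumRankWt_sum_smul_add {k : ℕ} (w : Fin k → K) (hw : w ≠ 0) :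
    ∑ l, nn l < sumRankWt F (∑ i, w i • fun j : (l : Fin ℓ) × Fin (nn l) =>
      (skewOp σ (a j.1) ^ (i : ℕ)) (β j.1 j.2)) + k := by
  let f i := if h : i < k then w ⟨i, h⟩ else 0
  have hf0 : f ≠ 0 := fun hf => hw (funext fun i => by simpa [f] using congr_fun hf i)
  have hcodeword : (∑ i, w i • fun j : (l : Fin ℓ) × Fin (nn l) =>
      (skewOp σ (a j.1) ^ (i : ℕ)) (β j.1 j.2))
        = fun j => skewEval σ (a j.1) f k (β j.1 j.2) := by
    ext j
    rw [skewEval_apply, ← Fin.sum_univ_eq_sum_range, Finset.sum_apply]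
    simp [f]
  rw [hcodeword]
  exact lt_sumRankWt_skewEval_add σ ha hconj hfix hβ (fun i hi => dif_neg (not_lt.mpr hi)) hf0

end LinearizedReedSolomon

theorem msrd_of_lt_sumRankWt_add {F K : Type*} [Field F] [Field K] [Algebra F K]
    {ℓ k : ℕ} {nn : Fin ℓ → ℕ} (G : Fin k → (((l : Fin ℓ) × Fin (nn l)) → K))
    (hk : 1 ≤ k) (hkn : k ≤ ∑ l, nn l)
    (hG : ∀ w : Fin k → K, w ≠ 0 → ∑ l, nn l < sumRankWt F (∑ i, w i • G i) + k) :
    Module.finrank K (Submodule.span K (Set.range G)) = k ∧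
    (∀ c ∈ Submodule.span K (Set.range G), c ≠ 0 → (∑ l, nn l) - k + 1 ≤ sumRankWt F c) ∧
    (∃ c ∈ Submodule.span K (Set.range G), c ≠ 0 ∧ sumRankWt F c = (∑ l, nn l) - k + 1) := by
  classical
  have hindep : LinearIndependent K G := by
    refine Fintype.linearIndependent_iff.mpr fun w hw => ?_
    by_contra hw0
    have hwt0 : sumRankWt F (0 : ((l : Fin ℓ) × Fin (nn l)) → K) = 0 :=
      Nat.le_zero.mp ((sumRankWt_le_card_support _).trans_eq (by simp))
    have h := hG w (fun h => hw0 fun i => congr_fun h i)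
    rw [hw, hwt0] at h
    omega
  have hdim : Module.finrank K (Submodule.span K (Set.range G)) = k := by
    rw [finrank_span_eq_card hindep, Fintype.card_fin]
  have hlower : ∀ c ∈ Submodule.span K (Set.range G), c ≠ 0 →
      (∑ l, nn l) - k + 1 ≤ sumRankWt F c := by
    intro c hc hc0
    obtain ⟨w, rfl⟩ := (Submodule.mem_span_range_iff_exists_fun K).mp hc
    have := hG w (by rintro rfl; simp at hc0)
    omega
  obtain ⟨c, hc, hc0, hsupp⟩ := exists_ne_zero_card_support_le _ (hdim ▸ hk)
  refine ⟨hdim, hlower, c, hc, hc0, le_antisymm ?_ (hlower c hc hc0)⟩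
  calc sumRankWt F c ≤ #{j | c j ≠ 0} := sumRankWt_le_card_support c
    _ ≤ _ := hsupp
    _ = _ := by simp [hdim]

section Frobenius

variable {Fq K : Type*} [Field Fq] [Fintype Fq] [Field K] [Algebra Fq K]

lemma mem_range_algebraMap_of_frobeniusAlgHom_eq {x : K}
    (hx : FiniteField.frobeniusAlgHom Fq K x = x) : x ∈ (algebraMap Fq K).range := by
  have hq := Fintype.one_lt_card (α := Fq)
  have hsplit : (Polynomial.X ^ Fintype.card Fq - Polynomial.X : Polynomial Fq).Splits := by
    rw [Polynomial.splits_iff_card_roots, FiniteField.roots_X_pow_card_sub_X, ← Finset.card_def,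
      Finset.card_univ, FiniteField.X_pow_card_sub_X_natDegree_eq _ hq]
  refine hsplit.mem_range_of_isRoot (FiniteField.X_pow_card_sub_X_ne_zero _ hq) ?_
  simpa [sub_eq_zero] using hx

lemma frobeniusAlgHom_div_self {c : K} (hc : c ≠ 0) :
    FiniteField.frobeniusAlgHom Fq K c / c = c ^ (Fintype.card Fq - 1) := by
  rw [FiniteField.coe_frobeniusAlgHom, pow_sub₀ c hc Fintype.card_pos, pow_one, div_eq_mul_inv]

lemma skewOp_frobeniusAlgHom_pow_apply (a x : K) (i : ℕ) :
    (skewOp (FiniteField.frobeniusAlgHom Fq K) a ^ i) x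
      = a ^ ((Fintype.card Fq ^ i - 1) / (Fintype.card Fq - 1)) * x ^ Fintype.card Fq ^ i := by
  rw [← Nat.geomSum_eq Fintype.one_lt_card]
  induction i with
  | zero => simp
  | succ i ih =>
    rw [pow_succ', Module.End.mul_apply, ih, skewOp_apply, FiniteField.coe_frobeniusAlgHom,
      geom_sum_succ, pow_succ, pow_add, pow_mul]
    ring

end Frobenius

theorem LRS_is_MSRD_general
    (q ℓ k : ℕ) (nn : Fin ℓ → ℕ)
    (hk : 1 ≤ k) (hkn : k ≤ ∑ l, nn l)
    (Fq K : Type*) [Field Fq] [Fintype Fq] (hq : Fintype.card Fq = q)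
    [Field K] [Algebra Fq K]
    (a : Fin ℓ → K) (ha : ∀ l, a l ≠ 0)
    (hconj : ∀ l l', l ≠ l' → ∀ c : K, c ≠ 0 → a l ≠ c ^ (q - 1) * a l')
    (β : (l : Fin ℓ) → Fin (nn l) → K) (hβ : ∀ l, LinearIndependent Fq (β l))
    (GLRS : Matrix (Fin k) ((l : Fin ℓ) × Fin (nn l)) K)
    (hGLRS : GLRS = Matrix.of fun (i : Fin k) (j : (l : Fin ℓ) × Fin (nn l)) =>
      a j.1 ^ ((q ^ (i : ℕ) - 1) / (q - 1)) * β j.1 j.2 ^ q ^ (i : ℕ)) :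
    Module.finrank K (Submodule.span K (Set.range fun i : Fin k => GLRS i)) = k ∧
    (∀ c ∈ Submodule.span K (Set.range fun i : Fin k => GLRS i),
      c ≠ 0 → (∑ l, nn l) - k + 1 ≤ sumRankWt Fq c) ∧
    (∃ c ∈ Submodule.span K (Set.range fun i : Fin k => GLRS i),
      c ≠ 0 ∧ sumRankWt Fq c = (∑ l, nn l) - k + 1) := by
  subst hq
  set σ := FiniteField.frobeniusAlgHom Fq K
  have hrows : (fun i : Fin k => GLRS i) = fun (i : Fin k) (j : (l : Fin ℓ) × Fin (nn l)) =>
      (skewOp σ (a j.1) ^ (i : ℕ)) (β j.1 j.2) := by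
    ext i j
    rw [hGLRS, skewOp_frobeniusAlgHom_pow_apply]
    rfl
  have hconjσ : ∀ l l', l ≠ l' → ∀ c : K, c ≠ 0 → a l ≠ σ c / c * a l' := fun l l' hl c hc => by
    rw [frobeniusAlgHom_div_self hc]
    exact hconj l l' hl c hc
  rw [hrows]
  exact msrd_of_lt_sumRankWt_add _ hk hkn fun w hw => lt_sumRankWt_sum_smul_add σ ha hconjσ
    (fun _ => mem_range_algebraMap_of_frobeniusAlgHom_eq) hβ w hw

/-- Linearized Reed–Solomon codes are MSRD: the row space of the matrix `G^LRS` with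
entry `a_l^{(q^i−1)/(q−1)} β_{l,t}^{q^i}` in row `i ∈ {0,…,k−1}` and column `(l,t)` is a
`k`-dimensional code whose minimum sum-rank distance with respect to `(n_1,…,n_ℓ)`
equals `n − k + 1`. -/
theorem LRS_is_MSRD
    (q m ℓ k : ℕ) (nn : Fin ℓ → ℕ) (hℓ : 1 ≤ ℓ) (hℓq : ℓ ≤ q - 1)
    (hnn : ∀ l, 1 ≤ nn l) (hnm : ∀ l, nn l ≤ m)
    (hk : 1 ≤ k) (hkn : k ≤ ∑ l, nn l)
    (Fq K : Type*) [Field Fq] [Fintype Fq] (hq : Fintype.card Fq = q)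
    [Field K] [Algebra Fq K] (hm : Module.finrank Fq K = m)
    (a : Fin ℓ → K) (ha : ∀ l, a l ≠ 0)
    (hconj : ∀ l l', l ≠ l' → ∀ c : K, c ≠ 0 → a l ≠ c ^ (q - 1) * a l')
    (β : (l : Fin ℓ) → Fin (nn l) → K) (hβ : ∀ l, LinearIndependent Fq (β l))
    (GLRS : Matrix (Fin k) ((l : Fin ℓ) × Fin (nn l)) K)
    (hGLRS : GLRS = Matrix.of fun (i : Fin k) (j : (l : Fin ℓ) × Fin (nn l)) =>
      a j.1 ^ ((q ^ (i : ℕ) - 1) / (q - 1)) * β j.1 j.2 ^ q ^ (i : ℕ)) :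
    Module.finrank K (Submodule.span K (Set.range fun i : Fin k => GLRS i)) = k ∧
    (∀ c ∈ Submodule.span K (Set.range fun i : Fin k => GLRS i),
      c ≠ 0 → (∑ l, nn l) - k + 1 ≤ sumRankWt Fq c) ∧
    (∃ c ∈ Submodule.span K (Set.range fun i : Fin k => GLRS i),
      c ≠ 0 ∧ sumRankWt Fq c = (∑ l, nn l) - k + 1) :=
  LRS_is_MSRD_general q ℓ k nn hk hkn Fq K hq a ha hconj β hβ GLRS hGLRS
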